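/- arXiv:1602.02069 — 6 statements merged into one kernel-verified Lean document; each statement's English description precedes it below -/
import Mathlib

section
/- A graph G is a cograph if and only if no induced subgraph of G has an adjacency eigenvalue in the open interval (-1, 0). -/
open scoped Classical

noncomputable section

/-- The real adjacency matrix of a finite simple graph. -/
def adjM {V : Type*} [Fintype V] (G : SimpleGraph V) : Matrix V V ℝ :=
  G.adjMatrix ℝ

/-- The multiplicity of `μ` as an eigenvalue of the adjacency matrix of `G`
(the dimension of the corresponding eigenspace; `0` if `μ` is not an eigenvalue). -/
def eigMult {V : Type*} [Fintype V] (G : SimpleGraph V) (μ : ℝ) : ℕ :=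
  Module.finrank ℝ (Module.End.eigenspace (Matrix.toLin' (adjM G)) μ)

/-- `μ` is an eigenvalue of the adjacency matrix of `G`. -/
def HasEig {V : Type*} [Fintype V] (G : SimpleGraph V) (μ : ℝ) : Prop :=
  Module.End.HasEigenvalue (Matrix.toLin' (adjM G)) μ

/-- A cograph: no induced path on four vertices. -/
def IsCograph {V : Type*} (G : SimpleGraph V) : Prop :=
  IsEmpty (SimpleGraph.pathGraph 4 ↪g G)

/-- A duplication class: a maximal set of more than one vertex, all with the same
open neighborhood. -/
def IsDupClass {V : Type*} (G : SimpleGraph V) (S : Set V) : Prop :=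
  1 < S.ncard ∧ (∀ u ∈ S, ∀ v ∈ S, G.neighborSet u = G.neighborSet v) ∧
    ∀ T : Set V, S ⊆ T → (∀ u ∈ T, ∀ v ∈ T, G.neighborSet u = G.neighborSet v) → T = S

/-- A coduplication class: a maximal set of more than one vertex, all with the same
closed neighborhood. -/
def IsCodupClass {V : Type*} (G : SimpleGraph V) (S : Set V) : Prop :=
  1 < S.ncard ∧
    (∀ u ∈ S, ∀ v ∈ S, insert u (G.neighborSet u) = insert v (G.neighborSet v)) ∧
    ∀ T : Set V, S ⊆ T →
      (∀ u ∈ T, ∀ v ∈ T, insert u (G.neighborSet u) = insert v (G.neighborSet v)) → T = S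

/-!
A cograph on at least two vertices is disconnected or has a disconnected complement (Seinsche),
so every cograph is built from single vertices by disjoint unions and complements. For
`μ ∈ (-1, 0)` we carry along, besides "`μ` is not an eigenvalue", the inequality
`𝟙ᵀ (μ - A)⁻¹ 𝟙 < -1`. It holds for a single vertex because `1 / μ < -1`, it adds up over disjoint
unions, and since `(μ - A) + (-1 - μ - Aᶜ) = -J`, it passes from `G` at `μ` to `Gᶜ` at `-1 - μ`,
a point of the same interval. Conversely, `P₄` has the eigenvalue `ψ = (1 - √5) / 2 ∈ (-1, 0)`,
with eigenvector `(1, ψ, ψ, 1)`.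
-/

open SimpleGraph Matrix Real

section

variable {V : Type*} {G : SimpleGraph V}

theorem isCograph_iff :
    IsCograph G ↔ ∀ a b c d, G.Adj a b → G.Adj b c → G.Adj c d →
      ¬G.Adj a c → ¬G.Adj b d → G.Adj a d := by
  constructor
  · intro hG a b c d hab hbc hcd hac hbd
    by_contra had
    have hac' : a ≠ c := fun h => had (h ▸ hcd)
    have hbd' : b ≠ d := fun h => had (h ▸ hab)
    have had' : a ≠ d := fun h => hac (h ▸ hcd.symm)
    refine hG.false ⟨⟨![a, b, c, d], fun i j hij => ?_⟩, fun {i j} => ?_⟩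
    · fin_cases i <;> fin_cases j <;> simp_all [hab.ne, hbc.ne, hcd.ne, eq_comm]
    · change G.Adj (![a, b, c, d] i) (![a, b, c, d] j) ↔ _
      fin_cases i <;> fin_cases j <;>
        simp [pathGraph_adj, hab, hbc, hcd, hac, had, hbd, hab.symm, hbc.symm, hcd.symm,
          G.adj_comm d, G.adj_comm c a]
  · intro h
    refine ⟨fun f => ?_⟩
    have hf : ∀ i j, G.Adj (f i) (f j) ↔ (pathGraph 4).Adj i j := fun i j => f.map_adj_iff
    simp only [pathGraph_adj] at hf
    exact absurd ((hf 0 3).mp (h _ _ _ _ ((hf 0 1).mpr (by simp)) ((hf 1 2).mpr (by simp))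
      ((hf 2 3).mpr (by simp)) (mt (hf 0 2).mp (by simp)) (mt (hf 1 3).mp (by simp))))
      (by simp)

theorem IsCograph.induce (hG : IsCograph G) (s : Set V) : IsCograph (G.induce s) :=
  ⟨fun f => hG.elim ((Embedding.induce s).comp f)⟩

theorem IsCograph.compl (hG : IsCograph G) : IsCograph Gᶜ := by
  rw [isCograph_iff] at hG ⊢
  intro a b c d hab hbc hcd hac hbd
  rw [compl_adj, not_and_or, not_not, not_not] at hac hbd
  rcases hac with rfl | hac
  · exact hcd
  rcases hbd with rfl | hbd
  · exact hab
  rw [compl_adj] at hab hbc hcd ⊢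
  refine ⟨fun had => hab.2 (had ▸ hbd.symm), fun had => hbc.2 ?_⟩
  -- `b - d - a - c` is an induced path of `G`
  exact hG b d a c hbd had.symm hac (fun h => hab.2 h.symm) (fun h => hcd.2 h.symm)

theorem SimpleGraph.Reachable.exists_adj_reachable_induce_compl_singleton {u v : V}
    (h : G.Reachable u v) (hu : u ≠ v) :
    ∃ a, ∃ ha : a ≠ v, G.Adj a v ∧ (G.induce {v}ᶜ).Reachable ⟨u, hu⟩ ⟨a, ha⟩ := by
  obtain ⟨p⟩ := h
  induction p with
  | nil => exact absurd rfl hu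
  | @cons u b w hub _ ih =>
    by_cases hb : b = w
    · exact ⟨u, hu, hb ▸ hub, .refl _⟩
    · obtain ⟨a, ha, haw, hba⟩ := ih hb
      have hub' : (G.induce {w}ᶜ).Adj ⟨u, hu⟩ ⟨b, hb⟩ := hub
      exact ⟨a, ha, haw, hub'.reachable.trans hba⟩

theorem IsCograph.preconnected_induce_compl_singleton (hG : IsCograph G) (hconn : G.Preconnected)
    (hconn' : Gᶜ.Preconnected) (v : V) : (G.induce {v}ᶜ).Preconnected := by
  set G' := G.induce {v}ᶜ
  by_contra hdis
  obtain ⟨x, y, hxy⟩ : ∃ x y, ¬G'.Reachable x y := by simpa [Preconnected] using hdis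
  have hnbr (u : V) (hu : u ≠ v) : ∃ a, ∃ ha : a ≠ v, G.Adj a v ∧ G'.Reachable ⟨u, hu⟩ ⟨a, ha⟩ :=
    Reachable.exists_adj_reachable_induce_compl_singleton (hconn u v) hu
  obtain ⟨w, hw, hwv, -⟩ := Reachable.exists_adj_reachable_induce_compl_singleton (hconn' x v) x.2
  obtain ⟨c, hc, hcv, hwc⟩ : ∃ c, ∃ hc : c ≠ v, G.Adj c v ∧ ¬G'.Reachable ⟨w, hw⟩ ⟨c, hc⟩ := by
    obtain ⟨ax, hax, haxv, hxax⟩ := hnbr x x.2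
    obtain ⟨ay, hay, hayv, hyay⟩ := hnbr y y.2
    by_cases hwax : G'.Reachable ⟨w, hw⟩ ⟨ax, hax⟩
    · exact ⟨ay, hay, hayv, fun hway => hxy (hxax.trans (hwax.symm.trans (hway.trans hyay.symm)))⟩
    · exact ⟨ax, hax, haxv, hwax⟩
  obtain ⟨aw, haw, hawv, hwaw⟩ := hnbr w hw
  -- an edge `q p` of `G'` leaving the non-neighbours of `v` inside the component of `w`
  obtain ⟨⟨⟨q, p⟩, hqp⟩, -, ⟨hwq, hqv⟩, hp⟩ := hwaw.some.exists_boundary_dart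
    {u | G'.Reachable ⟨w, hw⟩ u ∧ ¬G.Adj u v} ⟨.refl _, (compl_adj G w v).mp hwv |>.2⟩
    (fun h => h.2 hawv)
  have hwp : G'.Reachable ⟨w, hw⟩ p := hwq.trans hqp.reachable
  have hpv : G.Adj p v := by simpa [hwp] using hp
  have hqc : ¬G.Adj q c := fun h => hwc (hwq.trans (Adj.reachable (G := G') h))
  have hpc : ¬G.Adj p c := fun h => hwc (hwp.trans (Adj.reachable (G := G') h))
  exact hqc (isCograph_iff.mp hG q p v c hqp hpv hcv.symm hqv hpc)

theorem SimpleGraph.induce_compl (s : Set V) : Gᶜ.induce s = (G.induce s)ᶜ := by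
  ext a b
  simp [Subtype.ext_iff]

theorem IsCograph.not_preconnected_or_not_preconnected_compl [Finite V] [Nontrivial V]
    (hG : IsCograph G) : ¬G.Preconnected ∨ ¬Gᶜ.Preconnected := by
  suffices ∀ (α : Type _) [Finite α] (H : SimpleGraph α),
      IsCograph H → H.Preconnected → Hᶜ.Preconnected → Subsingleton α by
    by_contra! h
    exact not_subsingleton V (this V G hG h.1 h.2)
  intro α _
  induction α using Finite.induction_subsingleton_or_nontrivial with
  | hbase => intros; infer_instance
  | hstep α ih =>
    intro H hH hconn hconn'
    obtain ⟨v⟩ := (inferInstance : Nonempty α)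
    have hsub : Subsingleton ({v}ᶜ : Set α) :=
      ih _ (Finite.card_subtype_lt (x := v) (by simp)) _ (hH.induce _)
        (hH.preconnected_induce_compl_singleton hconn hconn' v)
        (induce_compl (G := H) _ ▸ hH.compl.preconnected_induce_compl_singleton hconn'
          (by rwa [compl_compl]) v)
    -- so `{v}ᶜ` is a single vertex, adjacent to `v` in both `H` and `Hᶜ`
    obtain ⟨w, hw⟩ := exists_ne v
    obtain ⟨a, ha, hav, -⟩ := Reachable.exists_adj_reachable_induce_compl_singleton (hconn w v) hw
    obtain ⟨b, hb, hbv, -⟩ := Reachable.exists_adj_reachable_induce_compl_singleton (hconn' w v) hw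
    have hab : a = b :=
      congrArg Subtype.val (Subsingleton.elim (α := ({v}ᶜ : Set α)) ⟨a, ha⟩ ⟨b, hb⟩)
    exact absurd (hab ▸ hav) ((compl_adj H b v).mp hbv).2

theorem SimpleGraph.exists_isCompl_no_adj_of_not_preconnected (h : ¬G.Preconnected) :
    ∃ S T : Set V, IsCompl S T ∧ S.Nonempty ∧ T.Nonempty ∧ ∀ u ∈ S, ∀ v ∉ S, ¬G.Adj u v := by
  obtain ⟨a, b, hab⟩ : ∃ a b, ¬G.Reachable a b := by simpa [Preconnected] using h
  exact ⟨{u | G.Reachable a u}, _, isCompl_compl, ⟨a, .refl a⟩, ⟨b, hab⟩,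
    fun u hu v hv huv => hv (Reachable.trans hu huv.reachable)⟩

section Spectrum

variable [Fintype V]

theorem hasEig_iff {μ : ℝ} : HasEig G μ ↔ ∃ x ≠ 0, adjM G *ᵥ x = μ • x := by
  simp [HasEig, Module.End.hasEigenvalue_iff, Submodule.ne_bot_iff, toLin'_apply, and_comm]

theorem not_hasEig_iff {μ : ℝ} : ¬HasEig G μ ↔ ∀ x, μ • x - adjM G *ᵥ x = 0 → x = 0 := by
  simp [hasEig_iff, not_imp_not, sub_eq_zero, eq_comm]

theorem HasEig.of_iso {W : Type*} [Fintype W] {H : SimpleGraph W} {μ : ℝ} (h : HasEig H μ)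
    (φ : H ≃g G) : HasEig G μ := by
  obtain ⟨x, hx0, hx⟩ := hasEig_iff.mp h
  set e : W ≃ V := φ.toEquiv
  have hA : adjM G = (adjM H).submatrix e.symm e.symm :=
    (φ.symm.toEmbedding.submatrix_adjMatrix ℝ).symm
  refine hasEig_iff.mpr ⟨x ∘ e.symm, fun h0 => hx0 (funext fun i => ?_), ?_⟩
  · simpa using congrFun h0 (e i)
  · rw [hA, submatrix_mulVec_equiv, Equiv.symm_symm, Function.comp_assoc, e.symm_comp_self,
      Function.comp_id, hx]
    rfl

theorem hasEig_pathGraph_four_goldenConj : HasEig (pathGraph 4) goldenConj := by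
  refine hasEig_iff.mpr ⟨![1, goldenConj, goldenConj, 1], fun h => by simpa using congrFun h 0, ?_⟩
  funext i
  fin_cases i <;> simp [adjM, mulVec, dotProduct, Fin.sum_univ_four, adjMatrix_apply,
    pathGraph_adj, ← sq, goldenConj_sq, add_comm]

theorem adjM_induce (S : Set V) : adjM (G.induce S) = (adjM G).submatrix (↑) (↑) :=
  ((Embedding.induce S).submatrix_adjMatrix ℝ).symm

theorem sub_adjM_mulVec_comp_val {S : Set V} (hS : ∀ u ∈ S, ∀ v ∉ S, ¬G.Adj u v) (μ : ℝ)
    (x : V → ℝ) :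
    (μ • x - adjM G *ᵥ x) ∘ (↑) = μ • (x ∘ (↑)) - adjM (G.induce S) *ᵥ (x ∘ ((↑) : S → V)) := by
  ext u
  suffices (adjM G *ᵥ x) u = (adjM (G.induce S) *ᵥ (x ∘ ((↑) : S → V))) u by simp [this]
  have hout (w : {w // w ∉ S}) : adjM G u w * x w = 0 := by simp [adjM, hS u u.2 w w.2]
  rw [mulVec, dotProduct, ← Fintype.sum_subtype_add_sum_subtype (· ∈ S)]
  simp [hout, adjM_induce, mulVec, dotProduct]

/-- For `μ` not an eigenvalue, the second clause says `𝟙ᵀ (μ - A)⁻¹ 𝟙 < -1`. -/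
def ResolventBound (G : SimpleGraph V) (μ : ℝ) : Prop :=
  ¬HasEig G μ ∧ ∀ x : V → ℝ, μ • x - adjM G *ᵥ x = 1 → ∑ v, x v < -1

theorem ResolventBound.of_subsingleton [Subsingleton V] [Nonempty V] {μ : ℝ}
    (hμ : μ ∈ Set.Ioo (-1) 0) : ResolventBound G μ := by
  have hA : adjM G = 0 := by
    ext u w
    simp [adjM, Subsingleton.elim u w]
  refine ⟨not_hasEig_iff.mpr fun x hx => ?_, fun x hx => ?_⟩
  · simpa [hA, hμ.2.ne] using hx
  · obtain ⟨v⟩ := (inferInstance : Nonempty V)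
    have hxv : μ * x v = 1 := by simpa [hA] using congrFun hx v
    rw [Fintype.sum_subsingleton _ v]
    nlinarith [hμ.1, hμ.2]

theorem sum_add_sum_of_isCompl {S T : Set V} (hST : IsCompl S T) (x : V → ℝ) :
    ∑ v : S, x v + ∑ v : T, x v = ∑ v, x v := by
  rw [← Fintype.sum_subtype_add_sum_subtype (· ∈ S) x]
  congr 1
  exact Fintype.sum_equiv (Equiv.subtypeEquivRight fun v => by rw [← hST.compl_eq]; rfl) _ _
    fun _ => rfl

theorem ResolventBound.of_no_adj {S T : Set V} (hST : IsCompl S T)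
    (hS : ∀ u ∈ S, ∀ v ∉ S, ¬G.Adj u v) {μ : ℝ}
    (h₁ : ResolventBound (G.induce S) μ) (h₂ : ResolventBound (G.induce T) μ) :
    ResolventBound G μ := by
  have hT : ∀ u ∈ T, ∀ v ∉ T, ¬G.Adj u v := fun u hu v hv huv =>
    hS v (by rwa [← hST.compl_eq, Set.mem_compl_iff, not_not] at hv) u
      (hST.disjoint.notMem_of_mem_right hu) huv.symm
  refine ⟨not_hasEig_iff.mpr fun x hx => ?_, fun x hx => ?_⟩
  · have h₁x := not_hasEig_iff.mp h₁.1 (x ∘ (↑)) (by rw [← sub_adjM_mulVec_comp_val hS, hx]; rfl)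
    have h₂x := not_hasEig_iff.mp h₂.1 (x ∘ (↑)) (by rw [← sub_adjM_mulVec_comp_val hT, hx]; rfl)
    funext u
    by_cases hu : u ∈ S
    · exact congrFun h₁x ⟨u, hu⟩
    · exact congrFun h₂x ⟨u, by rwa [← hST.compl_eq]⟩
  · have h₁x := h₁.2 (x ∘ (↑)) (by rw [← sub_adjM_mulVec_comp_val hS, hx]; rfl)
    have h₂x := h₂.2 (x ∘ (↑)) (by rw [← sub_adjM_mulVec_comp_val hT, hx]; rfl)
    rw [← sum_add_sum_of_isCompl hST]
    simp only [Function.comp_apply] at h₁x h₂x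
    linarith

theorem sub_adjM_mulVec_add_sub_adjM_compl_mulVec (μ : ℝ) (x : V → ℝ) :
    (μ • x - adjM G *ᵥ x) + ((-1 - μ) • x - adjM Gᶜ *ᵥ x) = fun _ => -∑ v, x v := by
  have hA : adjM G + adjM Gᶜ = of 1 - 1 := by
    ext i j
    by_cases hij : i = j
    · simp [adjM, hij]
    · by_cases hadj : G.Adj i j <;> simp [adjM, one_apply, hij, hadj]
  calc _ = -x - (adjM G + adjM Gᶜ) *ᵥ x := by rw [add_mulVec]; module
    _ = _ := by
      rw [hA, sub_mulVec, one_mulVec]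
      ext u
      simp [mulVec, dotProduct]
      ring

theorem ResolventBound.sum_div_lt {μ : ℝ} (h : ResolventBound G μ) {y : V → ℝ} {c : ℝ}
    (hc : c ≠ 0) (hy : μ • y - adjM G *ᵥ y = fun _ => c) : (∑ v, y v) / c < -1 := by
  have := h.2 (c⁻¹ • y) (by
    rw [smul_comm, mulVec_smul, ← smul_sub, hy]
    ext
    simp [hc])
  simpa [← Finset.mul_sum, div_eq_inv_mul] using this

theorem ResolventBound.compl [Nonempty V] {μ : ℝ} (h : ResolventBound G μ) :
    ResolventBound Gᶜ (-1 - μ) := by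
  refine ⟨not_hasEig_iff.mpr fun y hy => ?_, fun z hz => ?_⟩
  · have hy' : μ • y - adjM G *ᵥ y = fun _ => -∑ v, y v := by
      rw [eq_sub_of_add_eq (sub_adjM_mulVec_add_sub_adjM_compl_mulVec μ y), hy, sub_zero]
    by_cases hs : ∑ v, y v = 0
    · exact not_hasEig_iff.mp h.1 y (by rw [hy', hs, neg_zero]; rfl)
    · have := h.sum_div_lt (neg_ne_zero.mpr hs) hy'
      rw [div_neg, div_self hs] at this
      norm_num at this
  · set t := ∑ v, z v
    have hz' : μ • z - adjM G *ᵥ z = fun _ => -(1 + t) := by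
      rw [eq_sub_of_add_eq (sub_adjM_mulVec_add_sub_adjM_compl_mulVec μ z), hz]
      ext
      simp only [Pi.sub_apply, Pi.one_apply]
      ring
    have ht : 1 + t ≠ 0 := fun ht => by
      have hz0 := not_hasEig_iff.mp h.1 z (by rw [hz', ht, neg_zero]; rfl)
      simp [hz0] at hz
    have hsum := h.sum_div_lt (neg_ne_zero.mpr ht) hz'
    by_contra! hge
    have hpos : 0 < 1 + t := lt_of_le_of_ne (by linarith) (Ne.symm ht)
    rw [div_neg, neg_lt_neg_iff, lt_div_iff₀ hpos] at hsum
    linarith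

theorem IsCograph.resolventBound [Nonempty V] (hG : IsCograph G) {μ : ℝ}
    (hμ : μ ∈ Set.Ioo (-1) 0) : ResolventBound G μ := by
  suffices ∀ (α : Type _) [Finite α] [Fintype α] [Nonempty α] (H : SimpleGraph α), IsCograph H →
      ∀ ν ∈ Set.Ioo (-1 : ℝ) 0, ResolventBound H ν from this V G hG μ hμ
  clear hG hμ
  intro α _
  induction α using Finite.induction_subsingleton_or_nontrivial with
  | hbase => exact fun _ _ _ hν => .of_subsingleton hν
  | hstep α ih =>
    intro _ _ H hH ν hν
    have hsplit (K : SimpleGraph α) (hK : IsCograph K) (hconn : ¬K.Preconnected) (κ : ℝ)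
        (hκ : κ ∈ Set.Ioo (-1) 0) : ResolventBound K κ := by
      obtain ⟨S, T, hST, ⟨s, hs⟩, ⟨t, ht⟩, hS⟩ := exists_isCompl_no_adj_of_not_preconnected hconn
      have : Nonempty S := ⟨⟨s, hs⟩⟩
      have : Nonempty T := ⟨⟨t, ht⟩⟩
      exact .of_no_adj hST hS
        (ih S (Finite.card_subtype_lt (hST.disjoint.notMem_of_mem_right ht)) _ (hK.induce S) κ hκ)
        (ih T (Finite.card_subtype_lt (hST.disjoint.notMem_of_mem_left hs)) _ (hK.induce T) κ hκ)
    rcases hH.not_preconnected_or_not_preconnected_compl with hconn | hconn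
    · exact hsplit H hH hconn ν hν
    · simpa using (hsplit Hᶜ hH.compl hconn (-1 - ν) ⟨by linarith [hν.2], by linarith [hν.1]⟩).compl

end Spectrum

end

/-- A graph is a cograph iff no induced subgraph has an eigenvalue in the open
interval (-1, 0). -/
theorem cograph_iff_no_induced_eig_in_Ioo {V : Type*} [Fintype V] (G : SimpleGraph V) :
    IsCograph G ↔ ∀ s : Set V, ¬ ∃ μ ∈ Set.Ioo (-1 : ℝ) 0, HasEig (G.induce s) μ := by
  refine ⟨fun hG s ⟨μ, hμ, hs⟩ => ?_, fun h => ⟨fun f => h (Set.range f) ⟨goldenConj, ?_, ?_⟩⟩⟩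
  · cases isEmpty_or_nonempty s
    · obtain ⟨x, hx0, -⟩ := hasEig_iff.mp hs
      exact hx0 (Subsingleton.elim _ _)
    · exact ((hG.induce s).resolventBound hμ).1 hs
  · exact ⟨neg_one_lt_goldenConj, goldenConj_neg⟩
  · convert hasEig_pathGraph_four_goldenConj.of_iso (Embedding.isoInduceRange f)
end
end

section
/- If u and v are coduplicate vertices of a graph G (i.e., adjacent with the same closed neighborhood), then the multiplicity of the eigenvalue -1 of the adjacency matrix of G equals the multiplicity of -1 in G - v plus 1. -/
open scoped Classical

noncomputable section

/-- Summing over all vertices equals summing over the complement of `v`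
when the function vanishes at `v`. -/
lemma sum_compl_single' {V : Type*} [Fintype V] (v : V)
    [Fintype ({v}ᶜ : Set V)] (f : V → ℝ) (hf : f v = 0) :
    ∑ j : V, f j = ∑ j : ({v}ᶜ : Set V), f j.1 := by
  classical
  rw [← Finset.sum_erase_add Finset.univ f (Finset.mem_univ v), hf, add_zero]
  rw [Finset.sum_subtype (p := fun j => j ∈ ({v}ᶜ : Set V)) (Finset.univ.erase v) (by simp) f]

/-- Key matrix lemma: if rows and columns `u` and `v` of `B` coincide, then the
kernel of `B` has dimension one more than the kernel of the principal submatrix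
obtained by deleting `v`. -/
lemma key_mat {V : Type*} [Fintype V] [DecidableEq V] (B : Matrix V V ℝ) (u v : V)
    [Fintype ({v}ᶜ : Set V)] [DecidableEq ({v}ᶜ : Set V)]
    (huv : u ≠ v) (hr : ∀ j, B u j = B v j) (hc : ∀ j, B j u = B j v)
    (B' : Matrix ({v}ᶜ : Set V) ({v}ᶜ : Set V) ℝ)
    (hB' : ∀ w j : ({v}ᶜ : Set V), B' w j = B w.1 j.1) :
    Module.finrank ℝ (LinearMap.ker (Matrix.toLin' B))
      = Module.finrank ℝ (LinearMap.ker (Matrix.toLin' B')) + 1 := by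
  classical
  have huW : u ∈ ({v}ᶜ : Set V) := by simp [huv]
  -- restriction computation
  have hres : ∀ x : V → ℝ, x v = 0 → ∀ w : ({v}ᶜ : Set V),
      B'.mulVec (fun j : ({v}ᶜ : Set V) => x j.1) w = B.mulVec x w.1 := by
    intro x hx w
    simp only [Matrix.mulVec, dotProduct]
    rw [sum_compl_single' v (fun j => B w.1 j * x j) (by simp [hx])]
    exact (Finset.sum_congr rfl (fun j _ => by rw [hB'])).symm
  set K := LinearMap.ker (Matrix.toLin' B) with hK
  set K' := LinearMap.ker (Matrix.toLin' B') with hK'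
  have hmemK : ∀ x : V → ℝ, x ∈ K ↔ B.mulVec x = 0 := by
    intro x; rw [hK, LinearMap.mem_ker, Matrix.toLin'_apply]
  have hmemK' : ∀ y : ({v}ᶜ : Set V) → ℝ, y ∈ K' ↔ B'.mulVec y = 0 := by
    intro y; rw [hK', LinearMap.mem_ker, Matrix.toLin'_apply]
  -- e = e_u - e_v is in K
  have he : (Pi.single u 1 - Pi.single v 1 : V → ℝ) ∈ K := by
    rw [hmemK]
    rw [Matrix.mulVec_sub]
    funext i
    simp [Matrix.mulVec_single, hc i]
  -- the functional
  set π : K →ₗ[ℝ] ℝ := (LinearMap.proj v).comp K.subtype with hπ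
  have hπ_apply : ∀ x : K, π x = x.1 v := fun x => rfl
  have hπsurj : Function.Surjective π := by
    intro r
    refine ⟨(-r) • ⟨_, he⟩, ?_⟩
    rw [map_smul, hπ_apply]
    simp [Pi.single_apply, Ne.symm huv]
  have hrank : Module.finrank ℝ (LinearMap.range π) + Module.finrank ℝ (LinearMap.ker π)
      = Module.finrank ℝ K := LinearMap.finrank_range_add_finrank_ker π
  have hrange : Module.finrank ℝ (LinearMap.range π) = 1 := by
    rw [LinearMap.range_eq_top.mpr hπsurj, finrank_top, Module.finrank_self]
  -- the equivalence ker π ≃ K'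
  have hker : Module.finrank ℝ (LinearMap.ker π) = Module.finrank ℝ K' := by
    -- underlying restriction map
    set g : LinearMap.ker π →ₗ[ℝ] (({v}ᶜ : Set V) → ℝ) :=
      (LinearMap.funLeft ℝ ℝ (Subtype.val : ({v}ᶜ : Set V) → V)).comp
        (K.subtype.comp (LinearMap.ker π).subtype) with hg
    have hg_apply : ∀ x : LinearMap.ker π, g x = fun j : ({v}ᶜ : Set V) => x.1.1 j.1 :=
      fun x => rfl
    have hxv : ∀ x : LinearMap.ker π, x.1.1 v = 0 := by
      intro x
      have := x.2
      rwa [LinearMap.mem_ker, hπ_apply] at this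
    have hmem : ∀ x : LinearMap.ker π, g x ∈ K' := by
      intro x
      rw [hmemK', hg_apply]
      funext w
      rw [hres x.1.1 (hxv x) w]
      have := (hmemK x.1.1).mp x.1.2
      rw [this]; rfl
    set F : LinearMap.ker π →ₗ[ℝ] K' := g.codRestrict K' hmem with hF
    have hFbij : Function.Bijective F := by
      constructor
      · intro a b hab
        have h1 : g a = g b := congrArg Subtype.val hab
        apply Subtype.ext; apply Subtype.ext
        funext j
        by_cases hj : j = v
        · rw [hj, hxv a, hxv b]
        · have := congrFun h1 ⟨j, by simp [hj]⟩
          rw [hg_apply, hg_apply] at this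
          exact this
      · intro y
        set x : V → ℝ := fun j => if h : j ∈ ({v}ᶜ : Set V) then y.1 ⟨j, h⟩ else 0 with hx
        have hxv0 : x v = 0 := by simp [hx]
        have hxres : (fun j : ({v}ᶜ : Set V) => x j.1) = y.1 := by
          funext j; simp only [hx]; rw [dif_pos j.2]
        have hxK : x ∈ K := by
          rw [hmemK]
          have hW : ∀ w : ({v}ᶜ : Set V), B.mulVec x w.1 = 0 := by
            intro w
            rw [← hres x hxv0 w, hxres]
            have := (hmemK' y.1).mp y.2
            rw [this]; rfl
          funext i
          show B.mulVec x i = 0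
          by_cases hi : i = v
          · rw [hi]
            have hvu : B.mulVec x v = B.mulVec x u := by
              simp only [Matrix.mulVec, dotProduct]
              exact (Finset.sum_congr rfl (fun j _ => by rw [hr j])).symm
            rw [hvu]
            exact hW ⟨u, huW⟩
          · exact hW ⟨i, by simp [hi]⟩
        have hxπ : (⟨x, hxK⟩ : K) ∈ LinearMap.ker π := by
          rw [LinearMap.mem_ker, hπ_apply]; exact hxv0
        refine ⟨⟨⟨x, hxK⟩, hxπ⟩, ?_⟩
        apply Subtype.ext
        rw [hF]
        show g _ = y.1
        rw [hg_apply]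
        exact hxres
    exact LinearEquiv.finrank_eq (LinearEquiv.ofBijective F hFbij)
  omega

/-- The eigenspace of `-1` of `A` is the kernel of `A + 1`. -/
lemma eig_eq_ker' {V : Type*} [Fintype V] [DecidableEq V] (A : Matrix V V ℝ) :
    Module.End.eigenspace (Matrix.toLin' A) (-1) = LinearMap.ker (Matrix.toLin' (A + 1)) := by
  ext x
  rw [Module.End.mem_eigenspace_iff, LinearMap.mem_ker, Matrix.toLin'_apply,
    Matrix.toLin'_apply, Matrix.add_mulVec, Matrix.one_mulVec]
  constructor
  · intro h; rw [h]; simp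
  · intro h
    have := eq_neg_of_add_eq_zero_left h
    rw [this]; funext i; simp

/-- Entries of `adjM G + 1` in terms of closed neighborhoods. -/
lemma entry_eq' {V : Type*} [Fintype V] [DecidableEq V] (G : SimpleGraph V)
    [DecidableRel G.Adj] (w j : V) :
    (adjM G + 1) w j = if (j = w ∨ G.Adj w j) then 1 else 0 := by
  simp only [adjM, Matrix.add_apply, SimpleGraph.adjMatrix_apply, Matrix.one_apply]
  by_cases h1 : G.Adj w j
  · have : ¬ w = j := G.ne_of_adj h1
    simp [h1, this, Ne.symm this]
  · by_cases h2 : w = j <;> simp [h1, h2, Ne.symm, eq_comm]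

/-- Deleting one of a pair of coduplicate vertices drops the multiplicity of the
eigenvalue -1 by one. -/
theorem mult_negOne_of_coduplicate {V : Type*} [Fintype V] (G : SimpleGraph V) (u v : V)
    (huv : u ≠ v)
    (hcodup : insert u (G.neighborSet u) = insert v (G.neighborSet v)) :
    eigMult G (-1) = eigMult (G.induce ({v}ᶜ : Set V)) (-1) + 1 := by
  have hmem : ∀ j, (j = u ∨ G.Adj u j) ↔ (j = v ∨ G.Adj v j) := by
    intro j
    have h := Set.ext_iff.mp hcodup j
    simpa [SimpleGraph.mem_neighborSet] using h
  unfold eigMult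
  rw [eig_eq_ker' (adjM G)]
  rw [@eig_eq_ker' ({v}ᶜ : Set V) _ (fun a b => Classical.propDecidable (a = b))
    (adjM (G.induce ({v}ᶜ : Set V)))]
  apply key_mat _ u v huv
  · intro j; rw [entry_eq', entry_eq']; exact if_congr (hmem j) rfl rfl
  · intro j; rw [entry_eq', entry_eq']
    refine if_congr ?_ rfl rfl
    rw [eq_comm (a := u) (b := j), eq_comm (a := v) (b := j),
      G.adj_comm j u, G.adj_comm j v]
    exact hmem j
  · intro w j
    rw [@entry_eq' ({v}ᶜ : Set V) _ (fun a b => Classical.propDecidable (a = b))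
      (G.induce ({v}ᶜ : Set V)) _ w j, entry_eq']
    have hiff : (j = w ∨ (G.induce ({v}ᶜ : Set V)).Adj w j)
        ↔ ((j : V) = (w : V) ∨ G.Adj (w : V) (j : V)) := by
      simp [Subtype.ext_iff]
    simp only [hiff]
end
end

section
/- Let G be a graph, C a duplication class of G, C' a nonempty proper subset of C with |C'| ≤ |C| - 2, and H = G \ C' the induced subgraph on V(G) \ C'. Then any two vertices that are duplicates in H are duplicates in G, and any two vertices that are coduplicates in H are coduplicates in G. -/
open scoped Classical

noncomputable section

/-!
Every removed vertex `x ∈ C'` has a duplicate `t` in `C \ C'`, and adjacency to `x` is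
adjacency to `t`, which the induced subgraph still sees. For coduplicates `u ≠ v` of
`G \ C'` one needs `t ≠ u, v`: such `u, v` are adjacent, while `C` is independent, so at
most one of them lies in `C`, and `|C \ C'| ≥ 2` leaves a choice of `t`.
-/

namespace SimpleGraph

variable {V : Type*} {G : SimpleGraph V}

theorem adj_iff_adj_of_neighborSet_eq {a b : V} (h : G.neighborSet a = G.neighborSet b)
    (w : V) : G.Adj w a ↔ G.Adj w b := by
  rw [adj_comm, ← mem_neighborSet, h, mem_neighborSet, adj_comm]

theorem not_adj_of_neighborSet_eq {a b : V} (h : G.neighborSet a = G.neighborSet b) :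
    ¬G.Adj a b := fun hab => G.irrefl ((adj_iff_adj_of_neighborSet_eq h b).mp hab.symm)

theorem adj_of_insert_neighborSet_eq {u v : V} (huv : u ≠ v)
    (h : insert u (G.neighborSet u) = insert v (G.neighborSet v)) : G.Adj u v := by
  have hu : u ∈ insert v (G.neighborSet v) := h ▸ Set.mem_insert u _
  exact (hu.resolve_left huv).symm

theorem neighborSet_eq_of_induce_neighborSet_eq {S : Set V}
    (htwin : ∀ x ∉ S, ∃ t ∈ S, G.neighborSet t = G.neighborSet x) {u v : S}
    (h : (G.induce S).neighborSet u = (G.induce S).neighborSet v) :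
    G.neighborSet (u : V) = G.neighborSet (v : V) := by
  have hS (x : S) : G.Adj u x ↔ G.Adj v x := Set.ext_iff.mp h x
  ext x
  by_cases hx : x ∈ S
  · exact hS ⟨x, hx⟩
  · obtain ⟨t, ht, htx⟩ := htwin x hx
    exact (adj_iff_adj_of_neighborSet_eq htx u).symm.trans
      ((hS ⟨t, ht⟩).trans (adj_iff_adj_of_neighborSet_eq htx v))

theorem insert_neighborSet_eq_of_induce {S : Set V} {u v : S}
    (htwin : ∀ x ∉ S, ∃ t ∈ S, t ≠ u ∧ t ≠ v ∧ G.neighborSet t = G.neighborSet x)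
    (h : insert u ((G.induce S).neighborSet u) = insert v ((G.induce S).neighborSet v)) :
    insert (u : V) (G.neighborSet u) = insert (v : V) (G.neighborSet v) := by
  have hS (x : S) : x = u ∨ G.Adj u x ↔ x = v ∨ G.Adj v x := Set.ext_iff.mp h x
  ext x
  by_cases hx : x ∈ S
  · simpa [Subtype.ext_iff] using hS ⟨x, hx⟩
  · obtain ⟨t, ht, htu, htv, htx⟩ := htwin x hx
    have hxu : x ≠ u := fun h => hx (h ▸ u.2)
    have hxv : x ≠ v := fun h => hx (h ▸ v.2)
    have htS := hS ⟨t, ht⟩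
    simp only [Subtype.ext_iff, htu, htv, false_or] at htS
    simp only [Set.mem_insert_iff, mem_neighborSet, hxu, hxv, false_or]
    exact (adj_iff_adj_of_neighborSet_eq htx u).symm.trans
      (htS.trans (adj_iff_adj_of_neighborSet_eq htx v))

end SimpleGraph

theorem Set.one_lt_ncard_sdiff {α : Type*} {s t : Set α} (hts : t ⊆ s)
    (hcard : t.ncard + 2 ≤ s.ncard) : 1 < (s \ t).ncard := by
  have hs : s.Finite := Set.finite_of_ncard_pos (by omega)
  have := Set.le_ncard_sdiff t s (hs.subset hts)
  omega

theorem dup_codup_lift_of_remove_part_of_dupClass_general {V : Type*} (G : SimpleGraph V)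
    (C C' : Set V) (hC : IsDupClass G C) (hsub : C' ⊆ C)
    (hcard : C'.ncard + 2 ≤ C.ncard)
    (u v : ↥(C'ᶜ : Set V)) (huv : u ≠ v) :
    ((G.induce (C'ᶜ : Set V)).neighborSet u = (G.induce (C'ᶜ : Set V)).neighborSet v →
      G.neighborSet (u : V) = G.neighborSet (v : V)) ∧
    (insert u ((G.induce (C'ᶜ : Set V)).neighborSet u) =
        insert v ((G.induce (C'ᶜ : Set V)).neighborSet v) →
      insert (u : V) (G.neighborSet (u : V)) = insert (v : V) (G.neighborSet (v : V))) := by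
  obtain ⟨-, hC, -⟩ := hC
  have hrest := Set.one_lt_ncard_sdiff hsub hcard
  refine ⟨SimpleGraph.neighborSet_eq_of_induce_neighborSet_eq fun x hx => ?_,
    fun h => SimpleGraph.insert_neighborSet_eq_of_induce (fun x hx => ?_) h⟩
  · obtain ⟨t, ht⟩ := Set.nonempty_of_ncard_ne_zero (s := C \ C') (by omega)
    exact ⟨t, ht.2, hC t ht.1 x (hsub (not_not.mp hx))⟩
  · have hadj : G.Adj u v :=
      SimpleGraph.adj_of_insert_neighborSet_eq (G := G.induce C'ᶜ) huv h
    suffices ∃ t ∈ C \ C', t ≠ u ∧ t ≠ v from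
      let ⟨t, ht, htu, htv⟩ := this
      ⟨t, ht.2, htu, htv, hC t ht.1 x (hsub (not_not.mp hx))⟩
    by_cases hu : (u : V) ∈ C
    · obtain ⟨t, ht, htu⟩ := Set.exists_ne_of_one_lt_ncard hrest u
      exact ⟨t, ht, htu, fun htv =>
        SimpleGraph.not_adj_of_neighborSet_eq (hC u hu t ht.1) (htv ▸ hadj)⟩
    · obtain ⟨t, ht, htv⟩ := Set.exists_ne_of_one_lt_ncard hrest v
      exact ⟨t, ht, fun htu => hu (htu ▸ ht.1), htv⟩

/-- Removing a nonempty part of a duplication class, leaving at least two vertices of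
the class, creates no new duplicate or coduplicate pairs. -/
theorem dup_codup_lift_of_remove_part_of_dupClass {V : Type*} (G : SimpleGraph V)
    (C C' : Set V) (hC : IsDupClass G C) (hne : C'.Nonempty) (hsub : C' ⊆ C)
    (hcard : C'.ncard + 2 ≤ C.ncard)
    (u v : ↥(C'ᶜ : Set V)) (huv : u ≠ v) :
    ((G.induce (C'ᶜ : Set V)).neighborSet u = (G.induce (C'ᶜ : Set V)).neighborSet v →
      G.neighborSet (u : V) = G.neighborSet (v : V)) ∧
    (insert u ((G.induce (C'ᶜ : Set V)).neighborSet u) =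
        insert v ((G.induce (C'ᶜ : Set V)).neighborSet v) →
      insert (u : V) (G.neighborSet (u : V)) = insert (v : V) (G.neighborSet (v : V))) :=
  dup_codup_lift_of_remove_part_of_dupClass_general G C C' hC hsub hcard u v huv
end
end

section
/- On a simple graph define u < v iff N(u) ⊂ N[v] (strict inclusion). Restricted to a set of representatives of the equivalence classes of the relation u ≡ v (where u ≡ v iff N(u) \ {v} = N(v) \ {u}), the relation < is transitive: if u < v and v < w for pairwise inequivalent vertices u, v, w, then u < w. -/
open scoped Classical

noncomputable section

/-- On pairwise inequivalent vertices (u ≡ v iff N(u)\{v} = N(v)\{u}), the relation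
u < v iff N(u) ⊂ N[v] is transitive. -/
theorem neighborhood_lt_trans {V : Type*} (G : SimpleGraph V) (u v w : V)
    (huv : G.neighborSet u \ {v} ≠ G.neighborSet v \ {u})
    (hvw : G.neighborSet v \ {w} ≠ G.neighborSet w \ {v})
    (huw : G.neighborSet u \ {w} ≠ G.neighborSet w \ {u})
    (h1 : G.neighborSet u ⊂ insert v (G.neighborSet v))
    (h2 : G.neighborSet v ⊂ insert w (G.neighborSet w)) :
    G.neighborSet u ⊂ insert w (G.neighborSet w) := by
  have hsub : G.neighborSet u ⊆ insert w (G.neighborSet w) := by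
    intro x hx
    rcases Set.mem_insert_iff.1 (h1.1 hx) with rfl | hxv
    · -- x = v, and v ∈ N(u), so u ∈ N(v) ⊆ N[w]
      have hu : u ∈ G.neighborSet x := (G.adj_symm hx)
      rcases Set.mem_insert_iff.1 (h2.1 hu) with rfl | huw'
      · exact Set.mem_insert_of_mem _ hx
      · have hw : w ∈ G.neighborSet u := G.adj_symm huw'
        rcases Set.mem_insert_iff.1 (h1.1 hw) with h | h
        · subst h; exact absurd rfl hvw
        · exact Set.mem_insert_of_mem _ (G.adj_symm h)
    · exact h2.1 hxv
  refine ⟨hsub, fun hge => ?_⟩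
  have hw : w ∈ G.neighborSet u := hge (Set.mem_insert _ _)
  have hu : u ∈ G.neighborSet u := hge (Set.mem_insert_of_mem _ (G.adj_symm hw))
  exact G.irrefl hu
end
end

section
/- A graph G is a cograph if and only if every induced subgraph of G with more than one vertex has either a pair of duplicate vertices or a pair of coduplicate vertices. -/
open scoped Classical

noncomputable section

/-!
Duplicates and coduplicates are handled together as twins: vertices seen alike by every third
vertex. Twins pass to induced subgraphs and survive complementation (duplicates and coduplicates
swap), and `P₄` has none, so a graph whose induced subgraphs all have twins is a cograph.

Conversely, a cograph with at least two vertices is disconnected or has disconnected complement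
(Seinsche): delete a vertex `v` and, by induction and up to complementation, `G - v` is
disconnected; if `v` had a non-neighbour `y` and `G` were connected, every component of `G - v`
would contain a neighbour of `v`, and an edge between `N(v)` and its complement in the component
of `y`, together with `v` and a neighbour of `v` in another component, would span an induced `P₄`.
Twins of a nontrivial component are twins of the whole graph, any two vertices of an edgeless
graph are twins, and complementation handles the other case.
-/


namespace SimpleGraph

variable {V W : Type*} {G : SimpleGraph V} {H : SimpleGraph W}

/-- For `u ≠ v`: `u` and `v` are duplicates or coduplicates, according as they are non-adjacent
or adjacent. -/
def AreTwins (G : SimpleGraph V) (u v : V) : Prop :=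
  ∀ w, w ≠ u → w ≠ v → (G.Adj u w ↔ G.Adj v w)

def HasTwins (G : SimpleGraph V) : Prop :=
  ∃ u v, u ≠ v ∧ G.AreTwins u v

lemma areTwins_iff_neighborSet_eq_or_insert_eq {u v : V} (huv : u ≠ v) :
    G.AreTwins u v ↔ G.neighborSet u = G.neighborSet v ∨
      insert u (G.neighborSet u) = insert v (G.neighborSet v) := by
  constructor
  · intro h
    by_cases hadj : G.Adj u v
    · refine .inr (Set.ext fun w => ?_)
      by_cases hwu : w = u
      · subst hwu; simp [hadj.symm]
      by_cases hwv : w = v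
      · subst hwv; simp [hadj]
      simp [hwu, hwv, h w hwu hwv]
    · refine .inl (Set.ext fun w => ?_)
      by_cases hwu : w = u
      · subst hwu; simp [G.adj_comm v, hadj]
      by_cases hwv : w = v
      · subst hwv; simp [hadj]
      exact h w hwu hwv
  · rintro (h | h) w hwu hwv
    · exact Set.ext_iff.1 h w
    · simpa [hwu, hwv] using Set.ext_iff.1 h w

lemma AreTwins.compl {u v : V} (h : G.AreTwins u v) : Gᶜ.AreTwins u v := fun w hwu hwv => by
  simp [compl_adj, hwu.symm, hwv.symm, h w hwu hwv]

lemma HasTwins.of_compl (h : Gᶜ.HasTwins) : G.HasTwins := by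
  obtain ⟨u, v, huv, htw⟩ := h
  exact ⟨u, v, huv, compl_compl G ▸ htw.compl⟩

lemma AreTwins.comap (f : G ↪g H) {u v : V} (h : H.AreTwins (f u) (f v)) : G.AreTwins u v :=
  fun w hwu hwv => by simpa using h (f w) (f.injective.ne hwu) (f.injective.ne hwv)

lemma HasTwins.of_iso (e : G ≃g H) (h : H.HasTwins) : G.HasTwins := by
  obtain ⟨u, v, huv, htw⟩ := h
  exact ⟨e.symm u, e.symm v, e.symm.injective.ne huv,
    AreTwins.comap e.toEmbedding (by simpa using htw)⟩

lemma AreTwins.of_induce {t : Set V} (ht : ∀ a b, a ∈ t → G.Adj a b → b ∈ t) {u v : t}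
    (h : (G.induce t).AreTwins u v) : G.AreTwins u v := by
  intro w hwu hwv
  by_cases hw : w ∈ t
  · exact h ⟨w, hw⟩ (fun e => hwu congr($e.1)) (fun e => hwv congr($e.1))
  · exact iff_of_false (fun hu => hw (ht _ _ u.2 hu)) (fun hv => hw (ht _ _ v.2 hv))

lemma not_hasTwins_pathGraph_four : ¬(pathGraph 4).HasTwins := by
  simp only [HasTwins, AreTwins, pathGraph_adj]
  decide

lemma injective_of_adj_iff_of_not_hasTwins (hH : ¬H.HasTwins) {φ : W → V}
    (hφ : ∀ x y, G.Adj (φ x) (φ y) ↔ H.Adj x y) : Function.Injective φ := by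
  intro x y hxy
  by_contra hne
  exact hH ⟨x, y, hne, fun w _ _ => by rw [← hφ, ← hφ, hxy]⟩

lemma induce_compl_s18 (s : Set V) : Gᶜ.induce s = (G.induce s)ᶜ := by
  ext a b
  simp [compl_adj, Subtype.ext_iff]

lemma not_preconnected_of_adj_mem {t : Set V} (ht : ∀ a b, a ∈ t → G.Adj a b → b ∈ t)
    {a b : V} (ha : a ∈ t) (hb : b ∉ t) : ¬G.Preconnected := fun hG => by
  obtain ⟨d, -, hd, hd'⟩ := (hG a b).some.exists_boundary_dart t ha hb
  exact hd' (ht _ _ hd d.adj)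

lemma not_preconnected_of_forall_not_adj {v w : V} (hv : ∀ u, ¬G.Adj v u) (hwv : w ≠ v) :
    ¬G.Preconnected :=
  not_preconnected_of_adj_mem (t := {v}) (fun _ b ha hab => (hv b (ha ▸ hab)).elim) rfl hwv

lemma Reachable.exists_adj_mem_not_mem {a b : V} (h : G.Reachable a b) {S : Set V}
    (ha : a ∈ S) (hb : b ∉ S) : ∃ x y, G.Adj x y ∧ x ∈ S ∧ y ∉ S ∧ G.Reachable a x := by
  obtain ⟨p⟩ := h
  obtain ⟨d, hd, hx, hy⟩ := p.exists_boundary_dart S ha hb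
  exact ⟨d.fst, d.snd, d.adj, hx, hy,
    (p.takeUntil _ (p.dart_fst_mem_support_of_mem_darts hd)).reachable⟩

lemma Preconnected.exists_reachable_adj_induce_compl_singleton (hG : G.Preconnected) (v : V)
    (u : ({v}ᶜ : Set V)) : ∃ x : ({v}ᶜ : Set V), (G.induce {v}ᶜ).Reachable u x ∧ G.Adj v x := by
  by_contra! h
  refine not_preconnected_of_adj_mem (t := {w | ∃ hw : w ≠ v, (G.induce {v}ᶜ).Reachable u ⟨w, hw⟩})
    ?_ ⟨u.2, .rfl⟩ (fun hv => hv.1 rfl) hG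
  rintro a b ⟨ha, hua⟩ hab
  have hb : b ≠ v := by
    rintro rfl
    exact h ⟨a, ha⟩ hua hab.symm
  exact ⟨hb, hua.trans (Adj.reachable (G := G.induce {v}ᶜ) (u := ⟨a, ha⟩) (v := ⟨b, hb⟩) hab)⟩

lemma hasTwins_of_not_preconnected [Nontrivial V] (hG : ¬G.Preconnected)
    (h : ∀ t : Set V, t ≠ Set.univ → Nontrivial t → (G.induce t).HasTwins) : G.HasTwins := by
  by_cases hE : ∃ x y, G.Adj x y
  · obtain ⟨x, y, hxy⟩ := hE
    let t := {w | G.Reachable x w}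
    have ht : t ≠ Set.univ := fun ht => hG fun a b =>
      (Set.eq_univ_iff_forall.1 ht a).symm.trans (Set.eq_univ_iff_forall.1 ht b)
    have : Nontrivial t := ⟨⟨x, .rfl⟩, ⟨y, hxy.reachable⟩, fun e => hxy.ne (Subtype.mk.inj e)⟩
    obtain ⟨u, v, huv, htw⟩ := h t ht this
    exact ⟨u, v, Subtype.coe_injective.ne huv,
      htw.of_induce fun _ _ ha hab => Reachable.trans ha hab.reachable⟩
  · push Not at hE
    obtain ⟨u, v, huv⟩ := exists_pair_ne V
    exact ⟨u, v, huv, fun w _ _ => iff_of_false (hE u w) (hE v w)⟩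

end SimpleGraph

section

open SimpleGraph

variable {V W : Type*} {G : SimpleGraph V} {H : SimpleGraph W}

lemma not_isCograph_of_induced_path {a b c d : V} (hab : G.Adj a b) (hbc : G.Adj b c)
    (hcd : G.Adj c d) (hac : ¬G.Adj a c) (had : ¬G.Adj a d) (hbd : ¬G.Adj b d) :
    ¬IsCograph G := by
  intro hG
  have hφ : ∀ i j, G.Adj (![a, b, c, d] i) (![a, b, c, d] j) ↔ (pathGraph 4).Adj i j := by
    simp only [pathGraph_adj]
    intro i j
    fin_cases i <;> fin_cases j <;>
      simp [hab, hbc, hcd, hac, had, hbd, hab.symm, hbc.symm, hcd.symm, G.adj_comm _ a,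
        G.adj_comm _ b]
  exact hG.false ⟨⟨_, injective_of_adj_iff_of_not_hasTwins not_hasTwins_pathGraph_four hφ⟩, hφ _ _⟩

namespace IsCograph

lemma of_embedding (f : H ↪g G) (hG : IsCograph G) : IsCograph H :=
  ⟨fun g => hG.false (f.comp g)⟩

lemma compl_s18 (hG : IsCograph G) : IsCograph Gᶜ := by
  -- `P₄` is self-complementary: `![1, 3, 0, 2]` maps the path `0-1-2-3` onto the path `1-3-0-2`
  -- of its complement.
  let e : pathGraph 4 ↪g (pathGraph 4)ᶜ :=
    ⟨⟨![1, 3, 0, 2], by decide⟩, by simp only [compl_adj, pathGraph_adj]; decide⟩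
  exact ⟨fun f => hG.false (compl_compl G ▸ (Embedding.complEquiv f).comp e)⟩

lemma not_preconnected_of_not_preconnected_induce (hG : IsCograph G) {v y : V}
    (hyv : y ≠ v) (hy : ¬G.Adj v y) (hH : ¬(G.induce {v}ᶜ).Preconnected) : ¬G.Preconnected := by
  intro hconn
  set G' := G.induce ({v}ᶜ : Set V)
  let y' : ({v}ᶜ : Set V) := ⟨y, hyv⟩
  obtain ⟨z, hz⟩ : ∃ z, ¬G'.Reachable y' z := by
    by_contra! h
    exact hH fun a b => (h a).symm.trans (h b)
  obtain ⟨x, hyx, hvx⟩ := hconn.exists_reachable_adj_induce_compl_singleton v y'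
  obtain ⟨c, hzc, hvc⟩ := hconn.exists_reachable_adj_induce_compl_singleton v z
  obtain ⟨α, β, hαβ, hvα, hvβ, hyα⟩ :=
    hyx.symm.exists_adj_mem_not_mem (S := {w | G.Adj v w}) hvx hy
  have hαc : ¬G'.Reachable α c := fun h => hz ((hyx.trans (hyα.trans h)).trans hzc.symm)
  have hβc : ¬G'.Reachable β c := fun h => hαc (hαβ.reachable.trans h)
  -- `β - α - v - c` is an induced path because `c` lies in another component of `G - v`.
  exact not_isCograph_of_induced_path (a := β.1) hαβ.symm hvα.symm hvc (fun h => hvβ h.symm)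
    (fun h => hβc (Adj.reachable (G := G') h)) (fun h => hαc (Adj.reachable (G := G') h)) hG

theorem not_preconnected_or_not_preconnected_compl_s18 [Finite V] [Nontrivial V]
    (hG : IsCograph G) : ¬G.Preconnected ∨ ¬Gᶜ.Preconnected := by
  induction hn : Nat.card V using Nat.strong_induction_on generalizing V with
  | _ n ih =>
  obtain ⟨v⟩ := (inferInstance : Nonempty V)
  obtain ⟨w, hwv⟩ := exists_ne v
  by_cases hiso : ∀ u, ¬G.Adj v u
  · exact .inl (not_preconnected_of_forall_not_adj hiso hwv)
  by_cases huniv : ∀ u, u ≠ v → G.Adj v u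
  · refine .inr (not_preconnected_of_forall_not_adj (fun u hu => ?_) hwv)
    exact ((compl_adj G v u).1 hu).2 (huniv u ((compl_adj G v u).1 hu).1.symm)
  push Not at hiso huniv
  obtain ⟨x, hx⟩ := hiso
  obtain ⟨y, hyv, hy⟩ := huniv
  have : Nontrivial ({v}ᶜ : Set V) :=
    ⟨⟨x, hx.ne'⟩, ⟨y, hyv⟩, fun h => hy (Subtype.mk.inj h ▸ hx)⟩
  have hcard : Nat.card ({v}ᶜ : Set V) < n :=
    hn ▸ Finite.card_subtype_lt (by simp : v ∉ ({v}ᶜ : Set V))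
  rcases ih _ hcard (hG.of_embedding (Embedding.induce _)) rfl with h | h
  · exact .inl (hG.not_preconnected_of_not_preconnected_induce hyv hy h)
  · rw [← induce_compl_s18] at h
    exact .inr (hG.compl_s18.not_preconnected_of_not_preconnected_induce hx.ne' (by simp [hx]) h)

theorem hasTwins [Finite V] [Nontrivial V] (hG : IsCograph G) : G.HasTwins := by
  induction hn : Nat.card V using Nat.strong_induction_on generalizing V with
  | _ n ih =>
  have hproper : ∀ {G : SimpleGraph V}, IsCograph G →
      ∀ t : Set V, t ≠ Set.univ → Nontrivial t → (G.induce t).HasTwins := by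
    intro G hG t ht _
    obtain ⟨v, hv⟩ := (Set.ne_univ_iff_exists_notMem t).1 ht
    exact ih _ (hn ▸ Finite.card_subtype_lt hv) (hG.of_embedding (Embedding.induce t)) rfl
  rcases hG.not_preconnected_or_not_preconnected_compl_s18 with h | h
  · exact hasTwins_of_not_preconnected h (hproper hG)
  · exact (hasTwins_of_not_preconnected h (hproper hG.compl_s18)).of_compl

end IsCograph

end

theorem cograph_iff_dup_or_codup_general {V : Type*} (G : SimpleGraph V) :
    IsCograph G ↔ ∀ s : Set V, 1 < s.ncard →
      ∃ u v : ↥s, u ≠ v ∧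
        ((G.induce s).neighborSet u = (G.induce s).neighborSet v ∨
          insert u ((G.induce s).neighborSet u) = insert v ((G.induce s).neighborSet v)) := by
  constructor
  · intro hG s hs
    obtain ⟨hs, hfin⟩ := Set.one_lt_ncard_iff_nontrivial_and_finite.1 hs
    have := hfin.to_subtype
    have := hs.coe_sort
    obtain ⟨u, v, huv, htw⟩ := (hG.of_embedding (SimpleGraph.Embedding.induce s)).hasTwins
    exact ⟨u, v, huv, (SimpleGraph.areTwins_iff_neighborSet_eq_or_insert_eq huv).1 htw⟩
  · refine fun h => ⟨fun f => SimpleGraph.not_hasTwins_pathGraph_four ?_⟩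
    obtain ⟨u, v, huv, htw⟩ := h (Set.range f) (by simp [Set.ncard_range_of_injective f.injective])
    exact .of_iso (SimpleGraph.Embedding.isoInduceRange f)
      ⟨u, v, huv, (SimpleGraph.areTwins_iff_neighborSet_eq_or_insert_eq huv).2 htw⟩

/-- A graph is a cograph iff every induced subgraph with more than one vertex has a
pair of duplicate or a pair of coduplicate vertices. -/
theorem cograph_iff_dup_or_codup {V : Type*} [Fintype V] (G : SimpleGraph V) :
    IsCograph G ↔ ∀ s : Set V, 1 < s.ncard →
      ∃ u v : ↥s, u ≠ v ∧
        ((G.induce s).neighborSet u = (G.induce s).neighborSet v ∨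
          insert u ((G.induce s).neighborSet u) = insert v ((G.induce s).neighborSet v)) :=
  cograph_iff_dup_or_codup_general G
end
end

section
/- Let G be a graph with a vertex v adjacent to all other vertices, and let x be an eigenvector of the adjacency matrix of G for an eigenvalue λ with λ ≠ 0 and λ ≠ -1 and x(v) = 0. If additionally there is a vertex w with x(w) ≠ 0 such that x(u) = 0 for all u not adjacent to w (u ≠ w), then a contradiction follows; i.e., no such eigenvector-vertex pair exists. -/
open scoped Classical

noncomputable section

/-- Key step for simplicity of threshold-graph eigenvalues: there is no eigenvector for
an eigenvalue ≠ 0, -1 vanishing on a dominating vertex and supported, beyond some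
vertex w, only on the neighbors of w. -/
theorem no_eigenvector_vanishing_on_dominating {V : Type*} [Fintype V]
    (G : SimpleGraph V) (v : V) (hdom : ∀ u : V, u ≠ v → G.Adj v u)
    (μ : ℝ) (h0 : μ ≠ 0) (h1 : μ ≠ -1) (x : V → ℝ) (hx : x ≠ 0)
    (heig : (adjM G).mulVec x = μ • x) (hxv : x v = 0)
    (w : V) (hw : x w ≠ 0) (hsupp : ∀ u : V, u ≠ w → ¬ G.Adj u w → x u = 0) :
    False := by
  have hvw : v ≠ w := fun h => hw (h ▸ hxv)
  have hv := congrFun heig v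
  have hwv := congrFun heig w
  simp only [adjM, SimpleGraph.adjMatrix_mulVec_apply, Pi.smul_apply, smul_eq_mul] at hv hwv
  rw [hxv, mul_zero] at hv
  have hsum : ∑ u : V, x u = 0 := by
    rw [← hv]
    symm
    apply Finset.sum_subset (Finset.subset_univ _)
    intro u _ hu
    rcases eq_or_ne u v with rfl | h
    · exact hxv
    · exact absurd ((SimpleGraph.mem_neighborFinset _ _ _).mpr (hdom u h)) hu
  have hsplit : ∑ u : V, x u = (∑ u ∈ G.neighborFinset w, x u) + x w := by
    rw [← Finset.sum_subset (Finset.subset_univ (insert w (G.neighborFinset w)))]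
    · rw [Finset.sum_insert (by simp)]; ring
    · intro u _ hu
      simp only [Finset.mem_insert, SimpleGraph.mem_neighborFinset] at hu
      push_neg at hu
      exact hsupp u hu.1 (fun h => hu.2 h.symm)
  rw [hsum, hwv] at hsplit
  have hz : (μ + 1) * x w = 0 := by linarith
  rcases mul_eq_zero.mp hz with h | h
  · exact h1 (by linarith)
  · exact hw h
end
end
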